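/- Let (Σ,σ) be a primitive Markov subshift on a countable alphabet and let A : Σ → ℝ be a bounded above potential with summable variations satisfying inf A|_{⋃_{i∈F}[i]} > −∞. Then the function u_A(x) = sup{S_k(A − β_A)(y) : k ≥ 0, y ∈ Σ, σ^k(y) = x} is a minimal, nonnegative, bounded sub-action for A, and it satisfies Var_k(u_A) ≤ Σ_{j≥k} Var_j(A) for all k ≥ 1; in particular u_A is uniformly continuous. -/

import Mathlib

open MeasureTheory Filter Topology Set

/-- Membership in the Markov shift: admissible transitions at every coordinate. -/
def InShift (M : ℕ → ℕ → Bool) (x : ℕ → ℕ) : Prop := ∀ j, M (x j) (x (j+1)) = true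

/-- The one-sided countable Markov shift `Σ` associated to the transition matrix `M`,
as a subtype of `ℕ → ℕ` (with the product topology, which is the topology induced by
the metric `d(x,y) = λ^{min{j : x_j ≠ y_j}}`). -/
abbrev ShiftSpace (M : ℕ → ℕ → Bool) := {x : ℕ → ℕ // InShift M x}

/-- The left shift map `σ`. -/
def shiftMap (M : ℕ → ℕ → Bool) (x : ShiftSpace M) : ShiftSpace M :=
  ⟨fun j => x.1 (j+1), fun j => x.2 (j+1)⟩

/-- `Agree M k x y` means the points `x, y` coincide on the first `k` coordinates;
for `k ≥ 1` this is exactly `d(x,y) ≤ λ^k` for the metric of the paper. -/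
def Agree (M : ℕ → ℕ → Bool) (k : ℕ) (x y : ShiftSpace M) : Prop :=
  ∀ j < k, x.1 j = y.1 j

/-- The sets `B_n` of symbols admitting admissible words of length `n+1` starting at them. -/
def BSet (M : ℕ → ℕ → Bool) : ℕ → Set ℕ
  | 0 => {i | ∃ j, M i j = true}
  | n+1 => {i | ∃ j ∈ BSet M n, M i j = true}

/-- `⋂_{n ≥ 0} B_n`. -/
def BInf (M : ℕ → ℕ → Bool) : Set ℕ := ⋂ n, BSet M n

/-- `M` is primitive with connecting set `F` and connection length `K₀`: any two symbols
of `⋂ B_n` can be joined by an admissible word of length `K₀` with all letters in `F`. -/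
def Primitive (M : ℕ → ℕ → Bool) (F : Set ℕ) (K₀ : ℕ) : Prop :=
  ∀ i ∈ BInf M, ∀ j ∈ BInf M, ∃ p : ℕ → ℕ,
    p 0 = i ∧ p (K₀ + 1) = j ∧ (∀ t, 1 ≤ t → t ≤ K₀ → p t ∈ F) ∧
    (∀ t ≤ K₀, M (p t) (p (t+1)) = true)

/-- `A` is locally Hölder continuous with constant `H`:
`Var_k(A) ≤ H ⬝ λ^k` for every `k ≥ 1`. -/
def LocHolder (M : ℕ → ℕ → Bool) (lam H : ℝ) (A : ShiftSpace M → ℝ) : Prop :=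
  ∀ k : ℕ, 1 ≤ k → ∀ x y : ShiftSpace M, Agree M k x y → A x - A y ≤ H * lam ^ k

/-- `A` is coercive: `sup A|_{[i]} → -∞` as `i → ∞`. -/
def Coercive (M : ℕ → ℕ → Bool) (A : ShiftSpace M → ℝ) : Prop :=
  ∀ C : ℝ, ∃ N : ℕ, ∀ i : ℕ, N ≤ i → ∀ x : ShiftSpace M, x.1 0 = i → A x ≤ C

/-- The union of cylinders `⋃_{i ∈ F} [i]`. -/
def FCyl (M : ℕ → ℕ → Bool) (F : Set ℕ) : Set (ShiftSpace M) := {x | x.1 0 ∈ F}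

/-- `μ` is a `σ`-invariant Borel probability measure. -/
def InvProb (M : ℕ → ℕ → Bool) (μ : Measure (ShiftSpace M)) : Prop :=
  IsProbabilityMeasure μ ∧ μ.map (shiftMap M) = μ

/-- The ergodic maximizing value `β_A = sup {∫ A dμ : μ ∈ M_σ}`. -/
noncomputable def betaA (M : ℕ → ℕ → Bool) (A : ShiftSpace M → ℝ) : ℝ :=
  sSup {r | ∃ μ : Measure (ShiftSpace M), InvProb M μ ∧ Integrable A μ ∧ ∫ x, A x ∂μ = r}

/-- The compact subshift `Σ_I` on the finite alphabet `{0, …, I}`. -/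
def SpaceI (M : ℕ → ℕ → Bool) (I : ℕ) : Set (ShiftSpace M) := {x | ∀ j, x.1 j ≤ I}

/-- `β_A(I) = max {∫ A dμ : μ ∈ M_σ, supp μ ⊆ Σ_I}`. -/
noncomputable def betaAI (M : ℕ → ℕ → Bool) (A : ShiftSpace M → ℝ) (I : ℕ) : ℝ :=
  sSup {r | ∃ μ : Measure (ShiftSpace M), InvProb M μ ∧ μ (SpaceI M I) = 1 ∧
    Integrable A μ ∧ ∫ x, A x ∂μ = r}

/-- Birkhoff sum `S_k A`. -/
noncomputable def birkhoff (M : ℕ → ℕ → Bool) (A : ShiftSpace M → ℝ) (k : ℕ)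
    (x : ShiftSpace M) : ℝ :=
  ∑ j ∈ Finset.range k, A ((shiftMap M)^[j] x)

/-- The `k`-th variation `Var_k(A)`. -/
noncomputable def VarK (M : ℕ → ℕ → Bool) (A : ShiftSpace M → ℝ) (k : ℕ) : ℝ :=
  sSup {r | ∃ x y : ShiftSpace M, Agree M k x y ∧ A x - A y = r}

/-- `Var(A) = ∑_{k ≥ 1} Var_k(A)`. -/
noncomputable def VarSum (M : ℕ → ℕ → Bool) (A : ShiftSpace M → ℝ) : ℝ :=
  ∑' k : ℕ, VarK M A (k + 1)

/-- `sup A`. -/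
noncomputable def supA (M : ℕ → ℕ → Bool) (A : ShiftSpace M → ℝ) : ℝ :=
  sSup (Set.range A)

/-- `inf A|_{⋃_{i ∈ F} [i]}`. -/
noncomputable def infF (M : ℕ → ℕ → Bool) (F : Set ℕ) (A : ShiftSpace M → ℝ) : ℝ :=
  sInf (A '' FCyl M F)

/-- The defining set for `u_A(x)`: all values `S_k(A - β_A)(y)` with `σ^k(y) = x`. -/
noncomputable def uASet (M : ℕ → ℕ → Bool) (A : ShiftSpace M → ℝ) (x : ShiftSpace M) :
    Set ℝ :=
  {r | ∃ (k : ℕ) (y : ShiftSpace M), (shiftMap M)^[k] y = x ∧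
    birkhoff M A k y - k * betaA M A = r}

/-- The candidate minimal sub-action
`u_A(x) = sup {S_k(A - β_A)(y) : k ≥ 0, σ^k(y) = x}`. -/
noncomputable def uA (M : ℕ → ℕ → Bool) (A : ShiftSpace M → ℝ) (x : ShiftSpace M) : ℝ :=
  sSup (uASet M A x)

/-- The non-wandering set `Ω(A, I)` with respect to `A|_{Σ_I}`. -/
def NonWandering (M : ℕ → ℕ → Bool) (A : ShiftSpace M → ℝ) (I : ℕ) :
    Set (ShiftSpace M) :=
  {x | x ∈ SpaceI M I ∧ ∀ ε : ℝ, 0 < ε → ∀ m : ℕ,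
    ∃ y ∈ SpaceI M I, ∃ n : ℕ, 1 ≤ n ∧ Agree M m x y ∧
      Agree M m x ((shiftMap M)^[n] y) ∧
      |birkhoff M A n y - n * betaAI M A I| < ε}

/-!
A pre-image sum `S_k(A - β_A)(y)`, `σ^k y = x`, is bounded by closing the word `y₀ … y_{k-1}`
into a periodic orbit through a bridge of length `K₀` inside `F` (primitivity). The periodic
orbit measure is invariant, so the Birkhoff sum along the whole period is at most `(k + K₀) β_A`;
the bridge costs at most `K₀ (β_A - inf A|_F)`, and replacing `y` by the periodic point costs at
most `Var(A)`.

If `x, x'` agree on `k` coordinates, a pre-image `y` of `x` under `σ^m` re-attached to `x'` is a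
pre-image of `x'` agreeing with `y` on `m + k` coordinates, so the two Birkhoff sums differ by at
most `∑_{j ≥ k} Var_j(A)`: this is the variation bound for `u_A`.
-/

open scoped ENNReal
open Function

section PeriodicOrbit

variable {α : Type*} [MeasurableSpace α]

noncomputable def periodicOrbitMeasure (f : α → α) (n : ℕ) (z : α) : Measure α :=
  (n : ℝ≥0∞)⁻¹ • ∑ i ∈ Finset.range n, Measure.dirac (f^[i] z)

variable {f : α → α} {n : ℕ} {z : α}

lemma isProbabilityMeasure_periodicOrbitMeasure (hn : n ≠ 0) :
    IsProbabilityMeasure (periodicOrbitMeasure f n z) := by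
  constructor
  simp [periodicOrbitMeasure, ENNReal.inv_mul_cancel (Nat.cast_ne_zero.2 hn)]

lemma map_periodicOrbitMeasure (hf : Measurable f) (hz : IsPeriodicPt f n z) :
    (periodicOrbitMeasure f n z).map f = periodicOrbitMeasure f n z := by
  rw [periodicOrbitMeasure, Measure.map_smul, Measure.map_finset_sum hf.aemeasurable]
  simp only [Measure.map_dirac' hf, ← iterate_succ_apply' f]
  cases n with
  | zero => rfl
  | succ m =>
    rw [Finset.sum_range_succ, Finset.sum_range_succ' (fun i => Measure.dirac (f^[i] z)), hz.eq,
      iterate_zero_apply]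

variable [MeasurableSingletonClass α]

lemma integrable_periodicOrbitMeasure (hn : n ≠ 0) (g : α → ℝ) :
    Integrable g (periodicOrbitMeasure f n z) :=
  (integrable_finsetSum_measure.2 fun _ _ => integrable_dirac (by simp)).smul_measure
    (by simpa using hn)

lemma integral_periodicOrbitMeasure (g : α → ℝ) :
    ∫ x, g x ∂periodicOrbitMeasure f n z = (n : ℝ)⁻¹ * ∑ i ∈ Finset.range n, g (f^[i] z) := by
  rw [periodicOrbitMeasure, integral_smul_measure,
    integral_finsetSum_measure fun _ _ => integrable_dirac (by simp)]
  simp [integral_dirac]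

end PeriodicOrbit

section MarkovShift

variable {M : ℕ → ℕ → Bool}

lemma shiftMap_iterate_apply (x : ShiftSpace M) (i j : ℕ) :
    ((shiftMap M)^[i] x).1 j = x.1 (j + i) := by
  induction i generalizing j with
  | zero => rfl
  | succ i ih =>
    rw [iterate_succ_apply', ← add_comm 1, ← add_assoc]
    exact ih (j + 1)

lemma continuous_shiftMap : Continuous (shiftMap M) := by
  refine Continuous.subtype_mk (continuous_pi fun j => ?_) _
  exact (continuous_apply (j + 1)).comp continuous_subtype_val

lemma mem_BInf (x : ShiftSpace M) (j : ℕ) : x.1 j ∈ BInf M := by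
  refine mem_iInter.2 fun n => ?_
  induction n generalizing j with
  | zero => exact ⟨x.1 (j + 1), x.2 j⟩
  | succ n ih => exact ⟨x.1 (j + 1), ih (j + 1), x.2 j⟩

section Agree

variable {k l : ℕ} {x y : ShiftSpace M}

lemma Agree.symm (h : Agree M k x y) : Agree M k y x := fun j hj => (h j hj).symm

lemma Agree.mono (h : Agree M k x y) (hl : l ≤ k) : Agree M l x y := fun j hj => h j (by omega)

lemma eventually_agree (x : ShiftSpace M) (k : ℕ) : ∀ᶠ y in 𝓝 x, Agree M k x y := by
  refine (Set.finite_lt_nat k).eventually_all.2 fun j _ => ?_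
  have hj : Continuous fun y : ShiftSpace M => y.1 j :=
    (continuous_apply j).comp continuous_subtype_val
  filter_upwards [hj.continuousAt.preimage_mem_nhds ((isOpen_discrete {x.1 j}).mem_nhds rfl)]
    with y hy using hy.symm

end Agree

section Birkhoff

variable (A : ShiftSpace M → ℝ)

lemma birkhoff_zero (x : ShiftSpace M) : birkhoff M A 0 x = 0 := rfl

lemma birkhoff_succ (k : ℕ) (x : ShiftSpace M) :
    birkhoff M A (k + 1) x = birkhoff M A k x + A ((shiftMap M)^[k] x) :=
  Finset.sum_range_succ _ k

lemma birkhoff_add (k l : ℕ) (x : ShiftSpace M) :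
    birkhoff M A (k + l) x = birkhoff M A k x + birkhoff M A l ((shiftMap M)^[k] x) := by
  simp only [birkhoff, Finset.sum_range_add, ← iterate_add_apply, add_comm _ k]

variable {A}

lemma mul_le_birkhoff {c : ℝ} {k : ℕ} {x : ShiftSpace M}
    (h : ∀ i < k, c ≤ A ((shiftMap M)^[i] x)) : k * c ≤ birkhoff M A k x := by
  simpa [birkhoff] using
    Finset.card_nsmul_le_sum (Finset.range k) _ c fun i hi => h i (Finset.mem_range.1 hi)

lemma birkhoff_sub_mul_le_of_subaction {v : ShiftSpace M → ℝ} {c : ℝ}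
    (hv : ∀ x, A x + v x - v (shiftMap M x) ≤ c) (k : ℕ) (x : ShiftSpace M) :
    birkhoff M A k x - k * c ≤ v ((shiftMap M)^[k] x) - v x := by
  induction k with
  | zero => simp [birkhoff_zero]
  | succ k ih =>
    have := hv ((shiftMap M)^[k] x)
    rw [birkhoff_succ, iterate_succ_apply']
    push_cast
    linarith

end Birkhoff

section Variation

variable {A : ShiftSpace M → ℝ}

lemma VarK_nonneg [Nonempty (ShiftSpace M)] (k : ℕ) : 0 ≤ VarK M A k := by
  obtain ⟨x⟩ := ‹Nonempty (ShiftSpace M)›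
  exact Real.sSup_nonneg' ⟨0, ⟨x, x, fun _ _ => rfl, sub_self _⟩, le_rfl⟩

lemma sub_le_VarK {k : ℕ}
    (hvar : BddAbove {r | ∃ x y : ShiftSpace M, Agree M k x y ∧ A x - A y = r}) {x y : ShiftSpace M} (h : Agree M k x y) : A x - A y ≤ VarK M A k :=
  le_csSup hvar ⟨x, y, h, rfl⟩

lemma birkhoff_sub_le_sum_VarK
    (hvar : ∀ k : ℕ, 1 ≤ k →
      BddAbove {r | ∃ x y : ShiftSpace M, Agree M k x y ∧ A x - A y = r})
    {m k : ℕ} {x y : ShiftSpace M} (h : Agree M (m + k) x y) :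
    birkhoff M A m x - birkhoff M A m y ≤ ∑ i ∈ Finset.range m, VarK M A (k + 1 + i) := by
  rw [birkhoff, birkhoff, ← Finset.sum_sub_distrib, ← Finset.sum_range_reflect]
  refine Finset.sum_le_sum fun i hi => ?_
  have hi := Finset.mem_range.1 hi
  refine sub_le_VarK (hvar _ (by omega)) fun j hj => ?_
  rw [shiftMap_iterate_apply, shiftMap_iterate_apply]
  exact h _ (by omega)

lemma birkhoff_sub_le_tsum_VarK
    (hvar : ∀ k : ℕ, 1 ≤ k →
      BddAbove {r | ∃ x y : ShiftSpace M, Agree M k x y ∧ A x - A y = r})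
    (hs : Summable (VarK M A)) {m k : ℕ} {x y : ShiftSpace M} (h : Agree M (m + k) x y) :
    birkhoff M A m x - birkhoff M A m y ≤ ∑' j, VarK M A (k + 1 + j) := by
  have : Nonempty (ShiftSpace M) := ⟨x⟩
  exact (birkhoff_sub_le_sum_VarK hvar h).trans <|
    (hs.comp_injective (add_right_injective (k + 1))).sum_le_tsum _ fun _ _ => VarK_nonneg _

end Variation

section Beta

variable {A : ShiftSpace M → ℝ}

lemma bddAbove_integrals (hbdd : BddAbove (range A)) :
    BddAbove
      {r | ∃ μ : Measure (ShiftSpace M), InvProb M μ ∧ Integrable A μ ∧ ∫ x, A x ∂μ = r} := by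
  obtain ⟨C, hC⟩ := hbdd
  refine ⟨C, ?_⟩
  rintro r ⟨μ, ⟨hμ, -⟩, hint, rfl⟩
  simpa using integral_mono hint (integrable_const C) fun x => hC ⟨x, rfl⟩

lemma birkhoff_le_of_isPeriodicPt (hbdd : BddAbove (range A)) {n : ℕ} (hn : n ≠ 0)
    {z : ShiftSpace M} (hz : IsPeriodicPt (shiftMap M) n z) :
    birkhoff M A n z ≤ n * betaA M A := by
  have hμ : InvProb M (periodicOrbitMeasure (shiftMap M) n z) :=
    ⟨isProbabilityMeasure_periodicOrbitMeasure hn,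
      map_periodicOrbitMeasure continuous_shiftMap.measurable hz⟩
  have hint : (n : ℝ)⁻¹ * birkhoff M A n z ≤ betaA M A :=
    le_csSup (bddAbove_integrals hbdd)
      ⟨_, hμ, integrable_periodicOrbitMeasure hn A, integral_periodicOrbitMeasure A⟩
  have hn' : (0 : ℝ) < n := by positivity
  rwa [inv_mul_le_iff₀ hn'] at hint

end Beta

section Concat

def concatSeq (a : ℕ → ℕ) (m : ℕ) (b : ℕ → ℕ) (j : ℕ) : ℕ := if j < m then a j else b (j - m)

lemma concatSeq_of_lt {a b : ℕ → ℕ} {m j : ℕ} (hj : j < m) : concatSeq a m b j = a j := if_pos hj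

lemma concatSeq_of_le {a b : ℕ → ℕ} {m j : ℕ} (hj : m ≤ j) : concatSeq a m b j = b (j - m) :=
  if_neg (by omega)

lemma concatSeq_admissible {a b : ℕ → ℕ} {m L : ℕ} (ha : ∀ j < m, M (a j) (a (j + 1)) = true)
    (hab : a m = b 0) (hb : ∀ j < L, M (b j) (b (j + 1)) = true) :
    ∀ j < m + L, M (concatSeq a m b j) (concatSeq a m b (j + 1)) = true := by
  intro j hj
  rcases lt_or_ge j m with h | h
  · rw [concatSeq_of_lt h]
    rcases (Nat.add_one_le_of_lt h).lt_or_eq with h' | h'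
    · rw [concatSeq_of_lt h']
      exact ha j h
    · rw [concatSeq_of_le h'.ge, h', Nat.sub_self, ← hab, ← h']
      exact ha j h
  · rw [concatSeq_of_le h, concatSeq_of_le (by omega), show j + 1 - m = j - m + 1 by omega]
    exact hb _ (by omega)

lemma inShift_mod {w : ℕ → ℕ} {n : ℕ} (hn : 0 < n) (hw : ∀ j < n, M (w j) (w (j + 1)) = true)
    (hwn : w n = w 0) : InShift M fun j => w (j % n) := by
  intro j
  have ht : j % n < n := Nat.mod_lt j hn
  have hsucc : (j + 1) % n = (j % n + 1) % n := by
    conv_lhs => rw [← Nat.mod_add_div j n, add_right_comm, Nat.add_mul_mod_self_left]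
  have hstep := hw _ ht
  show M (w (j % n)) (w ((j + 1) % n)) = true
  rw [hsucc]
  rcases (Nat.add_one_le_of_lt ht).lt_or_eq with h | h
  · rwa [Nat.mod_eq_of_lt h]
  · rw [h] at hstep
    rwa [h, Nat.mod_self, ← hwn]

lemma exists_isPeriodicPt_agree {F : Set ℕ} {K₀ : ℕ} (hprim : Primitive M F K₀)
    (y : ShiftSpace M) (m : ℕ) :
    ∃ z : ShiftSpace M, IsPeriodicPt (shiftMap M) (m + 1 + K₀) z ∧ Agree M (m + 1) y z ∧
      ∀ i < K₀, z.1 (m + 1 + i) ∈ F := by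
  obtain ⟨p, hp0, hpK, hpF, hpM⟩ := hprim _ (mem_BInf y m) _ (mem_BInf y 0)
  set n := m + 1 + K₀
  set w := concatSeq y.1 m p with hw
  have hw0 : w 0 = y.1 0 := by
    rcases m.eq_zero_or_pos with hm | hm
    · subst hm
      rw [hw, concatSeq_of_le le_rfl, Nat.sub_self, hp0]
    · exact concatSeq_of_lt hm
  have hwn : w n = w 0 := by
    rw [hw0, hw, concatSeq_of_le (by omega), ← hpK]
    congr 1
    omega
  have hadm : ∀ j < n, M (w j) (w (j + 1)) = true := fun j hj =>
    concatSeq_admissible (fun j _ => y.2 j) hp0.symm (L := K₀ + 1)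
      (fun j hj => hpM j (by omega)) j (by omega)
  refine ⟨⟨fun j => w (j % n), inShift_mod (by omega) hadm hwn⟩, ?_, fun j hj => ?_, fun i hi => ?_⟩
  · exact Subtype.ext <| funext fun j => by
      simp only [shiftMap_iterate_apply, Nat.add_mod_right]
  · change y.1 j = w (j % n)
    rw [Nat.mod_eq_of_lt (by omega)]
    rcases (Nat.lt_succ_iff.1 hj).lt_or_eq with h | h
    · exact (concatSeq_of_lt h).symm
    · rw [hw, concatSeq_of_le h.ge, h, Nat.sub_self, hp0]
  · change w ((m + 1 + i) % n) ∈ F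
    rw [Nat.mod_eq_of_lt (by omega), hw, concatSeq_of_le (by omega)]
    exact hpF _ (by omega) (by omega)

lemma exists_iterate_eq_agree {w y : ShiftSpace M} {m k : ℕ} (hk : 1 ≤ k)
    (h : Agree M k ((shiftMap M)^[m] w) y) :
    ∃ w' : ShiftSpace M, (shiftMap M)^[m] w' = y ∧ Agree M (m + k) w w' := by
  have hwy : w.1 m = y.1 0 := by simpa [shiftMap_iterate_apply] using h 0 hk
  have hadm : InShift M (concatSeq w.1 m y.1) := fun j =>
    concatSeq_admissible (fun j _ => w.2 j) hwy (L := j + 1) (fun j _ => y.2 j) j (by omega)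
  refine ⟨⟨_, hadm⟩, Subtype.ext <| funext fun j => ?_, fun j hj => ?_⟩
  · rw [shiftMap_iterate_apply]
    exact (concatSeq_of_le (by omega)).trans (congrArg y.1 (by omega))
  · change w.1 j = concatSeq w.1 m y.1 j
    rcases lt_or_ge j m with hjm | hjm
    · exact (concatSeq_of_lt hjm).symm
    · rw [concatSeq_of_le hjm, ← h _ (by omega), shiftMap_iterate_apply, Nat.sub_add_cancel hjm]

end Concat

section MinimalSubaction

variable {A : ShiftSpace M → ℝ}

lemma birkhoff_sub_mul_betaA_le {F : Set ℕ} {K₀ : ℕ} (hprim : Primitive M F K₀)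
    (hbdd : BddAbove (range A)) (hbelow : BddBelow (A '' FCyl M F))
    (hvar : ∀ k : ℕ, 1 ≤ k →
      BddAbove {r | ∃ x y : ShiftSpace M, Agree M k x y ∧ A x - A y = r})
    (hs : Summable (VarK M A)) (m : ℕ) (y : ShiftSpace M) :
    birkhoff M A (m + 1) y - (m + 1 : ℕ) * betaA M A ≤
      K₀ * (betaA M A - infF M F A) + VarSum M A := by
  obtain ⟨z, hz, hyz, hzF⟩ := exists_isPeriodicPt_agree hprim y m
  have hclose : birkhoff M A (m + 1) y - birkhoff M A (m + 1) z ≤ VarSum M A := by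
    simpa [VarSum, add_comm] using birkhoff_sub_le_tsum_VarK hvar hs (k := 0) hyz
  have hbridge : K₀ * infF M F A ≤ birkhoff M A K₀ ((shiftMap M)^[m + 1] z) := by
    refine mul_le_birkhoff fun i hi => csInf_le hbelow ⟨_, ?_, rfl⟩
    show ((shiftMap M)^[i] _).1 0 ∈ F
    rw [shiftMap_iterate_apply, shiftMap_iterate_apply, zero_add, add_comm]
    exact hzF i hi
  have hperiod := birkhoff_le_of_isPeriodicPt hbdd (by omega) hz
  rw [birkhoff_add] at hperiod
  push_cast at hperiod ⊢
  linarith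

lemma le_of_mem_uASet {F : Set ℕ} {K₀ : ℕ} (hprim : Primitive M F K₀)
    (hbdd : BddAbove (range A)) (hbelow : BddBelow (A '' FCyl M F))
    (hvar : ∀ k : ℕ, 1 ≤ k →
      BddAbove {r | ∃ x y : ShiftSpace M, Agree M k x y ∧ A x - A y = r})
    (hs : Summable (VarK M A)) {x : ShiftSpace M} {r : ℝ} (hr : r ∈ uASet M A x) :
    r ≤ max 0 (K₀ * (betaA M A - infF M F A) + VarSum M A) := by
  obtain ⟨k, y, -, rfl⟩ := hr
  cases k with
  | zero => simp [birkhoff_zero]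
  | succ m => exact le_max_of_le_right (birkhoff_sub_mul_betaA_le hprim hbdd hbelow hvar hs m y)

lemma zero_mem_uASet (x : ShiftSpace M) : (0 : ℝ) ∈ uASet M A x :=
  ⟨0, x, rfl, by simp [birkhoff_zero]⟩

lemma uA_nonneg {x : ShiftSpace M} (hx : BddAbove (uASet M A x)) : 0 ≤ uA M A x :=
  le_csSup hx (zero_mem_uASet x)

lemma add_uA_sub_uA_shiftMap_le {x : ShiftSpace M} (hx : BddAbove (uASet M A (shiftMap M x))) :
    A x + uA M A x - uA M A (shiftMap M x) ≤ betaA M A := by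
  suffices uA M A x ≤ uA M A (shiftMap M x) - (A x - betaA M A) by linarith
  refine csSup_le ⟨0, zero_mem_uASet x⟩ ?_
  rintro _ ⟨k, y, rfl, rfl⟩
  refine le_sub_iff_add_le.2 (le_csSup hx ⟨k + 1, y, iterate_succ_apply' _ _ _, ?_⟩)
  rw [birkhoff_succ]
  push_cast
  ring

lemma uA_le_of_subaction {v : ShiftSpace M → ℝ} (hv0 : ∀ x, 0 ≤ v x)
    (hv : ∀ x, A x + v x - v (shiftMap M x) ≤ betaA M A) (x : ShiftSpace M) : uA M A x ≤ v x := by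
  refine csSup_le ⟨0, zero_mem_uASet x⟩ ?_
  rintro _ ⟨k, y, rfl, rfl⟩
  linarith [birkhoff_sub_mul_le_of_subaction hv k y, hv0 y]

lemma uA_sub_uA_le
    (hvar : ∀ k : ℕ, 1 ≤ k →
      BddAbove {r | ∃ x y : ShiftSpace M, Agree M k x y ∧ A x - A y = r})
    (hs : Summable (VarK M A)) {k : ℕ} (hk : 1 ≤ k) {x y : ShiftSpace M}
    (hy : BddAbove (uASet M A y)) (hxy : Agree M k x y) :
    uA M A x - uA M A y ≤ ∑' j, VarK M A (k + j) := by
  suffices uA M A x ≤ uA M A y + ∑' j, VarK M A (k + j) by linarith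
  refine csSup_le ⟨0, zero_mem_uASet x⟩ ?_
  rintro _ ⟨m, w, rfl, rfl⟩
  obtain ⟨w', rfl, hww'⟩ := exists_iterate_eq_agree hk hxy
  have hclose := birkhoff_sub_le_tsum_VarK hvar hs (Agree.mono hww' (l := m + (k - 1)) (by omega))
  rw [Nat.sub_add_cancel hk] at hclose
  have hw' : birkhoff M A m w' - m * betaA M A ≤ uA M A _ := le_csSup hy ⟨m, w', rfl, rfl⟩
  linarith

end MinimalSubaction

section Continuity

variable {u : ShiftSpace M → ℝ}

lemma exists_agree_abs_sub_le {t : ℕ → ℝ} (ht : Tendsto t atTop (𝓝 0))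
    (hu : ∀ k, 1 ≤ k → ∀ x y, Agree M k x y → u x - u y ≤ t k) {ε : ℝ} (hε : 0 < ε) :
    ∃ k, ∀ x y, Agree M k x y → |u x - u y| ≤ ε := by
  obtain ⟨k, hk, hkε⟩ := ((eventually_ge_atTop 1).and (ht.eventually (ge_mem_nhds hε))).exists
  exact ⟨k, fun x y h => abs_sub_le_iff.2
    ⟨(hu k hk x y h).trans hkε, (hu k hk y x (Agree.symm h)).trans hkε⟩⟩

lemma continuous_of_forall_agree
    (hu : ∀ ε : ℝ, 0 < ε → ∃ k, ∀ x y, Agree M k x y → |u x - u y| ≤ ε) : Continuous u := by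
  refine continuous_iff_continuousAt.2 fun x => Metric.tendsto_nhds.2 fun ε hε => ?_
  obtain ⟨k, hk⟩ := hu (ε / 2) (by positivity)
  filter_upwards [eventually_agree x k] with y hy
  rw [Real.dist_eq, abs_sub_comm]
  linarith [hk x y hy]

end Continuity

end MarkovShift

/-- for a bounded above potential with summable variations and
`inf A|_{⋃_{i∈F}[i]} > -∞`, the function `u_A` is a minimal, nonnegative, bounded
sub-action with `Var_k(u_A) ≤ ∑_{j ≥ k} Var_j(A)` for all `k ≥ 1`; in particular
`u_A` is uniformly continuous. -/
theorem uA_summable_variations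
    (M : ℕ → ℕ → Bool) (F : Set ℕ) (K₀ : ℕ)
    (hprim : Primitive M F K₀)
    (A : ShiftSpace M → ℝ)
    (hbdd : BddAbove (Set.range A))
    (hbelow : BddBelow (A '' FCyl M F))
    (hvarbdd : ∀ k : ℕ, 1 ≤ k → BddAbove {r : ℝ | ∃ x y : ShiftSpace M, Agree M k x y ∧ A x - A y = r})
    (hsum : Summable (fun k : ℕ => VarK M A (k + 1))) :
    (∀ x, 0 ≤ uA M A x) ∧
    BddAbove (Set.range (uA M A)) ∧
    Continuous (uA M A) ∧
    (∀ x, A x + uA M A x - uA M A (shiftMap M x) ≤ betaA M A) ∧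
    (∀ v : ShiftSpace M → ℝ, Continuous v → (∀ x, 0 ≤ v x) →
      (∀ x, A x + v x - v (shiftMap M x) ≤ betaA M A) → ∀ x, uA M A x ≤ v x) ∧
    (∀ k : ℕ, 1 ≤ k → ∀ x y : ShiftSpace M, Agree M k x y →
      uA M A x - uA M A y ≤ ∑' j : ℕ, VarK M A (k + j)) ∧
    (∀ ε : ℝ, 0 < ε → ∃ k : ℕ, ∀ x y : ShiftSpace M, Agree M k x y →
      |uA M A x - uA M A y| ≤ ε) := by
  have hs : Summable (VarK M A) := (summable_nat_add_iff 1).1 hsum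
  obtain ⟨C, hbound⟩ : ∃ C, ∀ x, C ∈ upperBounds (uASet M A x) :=
    ⟨_, fun _ _ hr => le_of_mem_uASet hprim hbdd hbelow hvarbdd hs hr⟩
  have hvar_uA : ∀ k : ℕ, 1 ≤ k → ∀ x y : ShiftSpace M, Agree M k x y →
      uA M A x - uA M A y ≤ ∑' j : ℕ, VarK M A (k + j) :=
    fun k hk x y h => uA_sub_uA_le hvarbdd hs hk ⟨C, hbound y⟩ h
  have hunif : ∀ ε : ℝ, 0 < ε → ∃ k : ℕ, ∀ x y : ShiftSpace M, Agree M k x y →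
      |uA M A x - uA M A y| ≤ ε := fun ε hε =>
    exists_agree_abs_sub_le (by simpa only [add_comm] using tendsto_sum_nat_add (VarK M A))
      hvar_uA hε
  refine ⟨fun x => uA_nonneg ⟨C, hbound x⟩, ⟨C, ?_⟩, continuous_of_forall_agree hunif,
    fun x => add_uA_sub_uA_shiftMap_le ⟨C, hbound _⟩, fun v _ => uA_le_of_subaction,
    hvar_uA, hunif⟩
  rintro _ ⟨x, rfl⟩
  exact csSup_le ⟨0, zero_mem_uASet x⟩ (hbound x)
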